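/- arXiv:2204.09474 — 12 statements merged into one kernel-verified Lean document; each statement's English description precedes it below -/
import Mathlib

section
/- In a commutative algebra A over a field of characteristic not 2 or 3 satisfying (a²)² = 0 for all a, the identity a² · (a · b) = 0 holds for all a, b ∈ A. -/
structure FourAlgebra (k : Type*) (A : Type*) [Field k] [AddCommGroup A] [Module k A] where
  mul : A →ₗ[k] A →ₗ[k] A
  comm : ∀ a b : A, mul a b = mul b a
  four : ∀ a : A, mul (mul a a) (mul a a) = 0

/-!
Expanding `((a + t b)²)² = 0` in the scalar `t` gives `t p₁ + t² p₂ + t³ p₃ = 0` with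
`p₁ = 4 a²(ab)`, since the `t⁰` and `t⁴` terms are `(a²)²` and `(b²)²`. Evaluating at
`t = 1, -1, 2` isolates `6 p₁ = 24 a²(ab)`, and `24` is invertible when the characteristic
is not `2` or `3`.
-/

theorem six_smul_eq_zero_of_cubic_vanishes {R M : Type*} [CommRing R] [AddCommGroup M]
    [Module R M] {x y z : M} (h : ∀ t : R, t • x + t ^ 2 • y + t ^ 3 • z = 0) :
    (6 : R) • x = 0 := by
  have h₁ := h 1
  have h₂ := h (-1)
  have h₃ := h 2
  linear_combination (norm := module) (6 : R) • h₁ - (2 : R) • h₂ - h₃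

namespace FourAlgebra

variable {k A : Type*} [Field k] [AddCommGroup A] [Module k A] (F : FourAlgebra k A)

theorem mul_sq_add_smul (a b : A) (t : k) :
    F.mul (F.mul (a + t • b) (a + t • b)) (F.mul (a + t • b) (a + t • b)) =
      t • (4 : k) • F.mul (F.mul a a) (F.mul a b) +
      t ^ 2 • ((4 : k) • F.mul (F.mul a b) (F.mul a b) + (2 : k) • F.mul (F.mul a a) (F.mul b b)) +
      t ^ 3 • (4 : k) • F.mul (F.mul a b) (F.mul b b) := by
  simp only [map_add, map_smul, LinearMap.add_apply, LinearMap.smul_apply, F.comm b a,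
    F.comm (F.mul a b) (F.mul a a), F.comm (F.mul b b) (F.mul a a),
    F.comm (F.mul b b) (F.mul a b), F.four a, F.four b]
  module

end FourAlgebra

theorem stmt0 (k A : Type*) [Field k] [AddCommGroup A] [Module k A]
    (h2 : (2 : k) ≠ 0) (h3 : (3 : k) ≠ 0) (F : FourAlgebra k A) (a b : A) :
    F.mul (F.mul a a) (F.mul a b) = 0 := by
  have h24 : (24 : k) • F.mul (F.mul a a) (F.mul a b) = 0 := by
    have := six_smul_eq_zero_of_cubic_vanishes fun t => (F.mul_sq_add_smul a b t).symm.trans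
      (F.four _)
    rwa [smul_smul, show (6 : k) * 4 = 24 by norm_num] at this
  have h24_ne : (24 : k) ≠ 0 := by
    rw [show (24 : k) = 2 ^ 3 * 3 by norm_num]
    exact mul_ne_zero (pow_ne_zero 3 h2) h3
  exact (smul_eq_zero.mp h24).resolve_left h24_ne
end

section
/- In a 4-algebra A over a field of characteristic not 2 or 3, the identity a² · (b·c) + 2(a·b)·(a·c) = 0 holds for all a, b, c ∈ A. -/
lemma eq_zero_of_two_nsmul_eq_zero {K V : Type*} [DivisionRing K] [AddCommGroup V] [Module K V]
    (h2 : (2 : K) ≠ 0) {v : V} (hv : 2 • v = 0) : v = 0 :=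
  (smul_eq_zero_iff_right h2).mp (by rwa [ofNat_smul_eq_nsmul])

namespace FourAlgebra

variable {k A : Type*} [Field k] [AddCommGroup A] [Module k A] (F : FourAlgebra k A)

lemma four_nsmul_sq_mul_sq_add_two_nsmul (x y : A) :
    4 • (F.mul (F.mul x x) (F.mul y y) + 2 • F.mul (F.mul x y) (F.mul x y)) = 0 := by
  have hsum := F.four (x + y)
  have hdiff := F.four (x - y)
  simp only [map_add, map_sub, LinearMap.add_apply, LinearMap.sub_apply, F.comm y x,
    F.comm (F.mul y y) (F.mul x y), F.comm (F.mul y y) (F.mul x x),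
    F.comm (F.mul x y) (F.mul x x)] at hsum hdiff
  linear_combination (norm := module) hsum + hdiff - (2 : ℤ) • F.four x - (2 : ℤ) • F.four y

lemma sq_mul_sq_add_two_nsmul (h2 : (2 : k) ≠ 0) (x y : A) :
    F.mul (F.mul x x) (F.mul y y) + 2 • F.mul (F.mul x y) (F.mul x y) = 0 := by
  have h4 := F.four_nsmul_sq_mul_sq_add_two_nsmul x y
  rw [show (4 : ℕ) = 2 * 2 from rfl, mul_nsmul] at h4
  exact eq_zero_of_two_nsmul_eq_zero h2 (eq_zero_of_two_nsmul_eq_zero h2 h4)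

end FourAlgebra

theorem stmt3_general (k A : Type*) [Field k] [AddCommGroup A] [Module k A]
    (h2 : (2 : k) ≠ 0) (F : FourAlgebra k A) (a b c : A) :
    F.mul (F.mul a a) (F.mul b c) + 2 • F.mul (F.mul a b) (F.mul a c) = 0 := by
  have hbc := F.sq_mul_sq_add_two_nsmul h2 a (b + c)
  simp only [map_add, LinearMap.add_apply, F.comm c b, F.comm (F.mul a c) (F.mul a b)] at hbc
  refine eq_zero_of_two_nsmul_eq_zero h2 ?_
  linear_combination (norm := module)
    hbc - F.sq_mul_sq_add_two_nsmul h2 a b - F.sq_mul_sq_add_two_nsmul h2 a c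

theorem stmt3 (k A : Type*) [Field k] [AddCommGroup A] [Module k A]
    (h2 : (2 : k) ≠ 0) (h3 : (3 : k) ≠ 0) (F : FourAlgebra k A) (a b c : A) :
    F.mul (F.mul a a) (F.mul b c) + 2 • F.mul (F.mul a b) (F.mul a c) = 0 :=
  stmt3_general k A h2 F a b c
end

section
/- Up to isomorphism there are exactly three 2-dimensional 4-algebras over a field k of characteristic ≠ 2: the abelian one (all products zero), the algebra A₁ with basis {e₁, e₂} and e₁² = e₂, e₁e₂ = e₂² = 0, and the algebra A₂ with e₁e₂ = e₂, e₁² = e₂² = 0. -/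
/-- Isomorphism of 4-algebras: a linear equivalence preserving multiplication. -/
def FourIso {k A B : Type*} [Field k] [AddCommGroup A] [Module k A]
    [AddCommGroup B] [Module k B] (F : FourAlgebra k A) (G : FourAlgebra k B) : Prop :=
  ∃ e : A ≃ₗ[k] B, ∀ x y : A, e (F.mul x y) = G.mul (e x) (e y)

/-- The abelian 2-dimensional 4-algebra. -/
def abAlg (k : Type*) [Field k] : FourAlgebra k (k × k) where
  mul := 0
  comm := by intro a b; simp
  four := by intro a; simp

/-- The 4-algebra A₁ : e₁² = e₂, e₁e₂ = e₂² = 0. -/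
def a1Alg (k : Type*) [Field k] : FourAlgebra k (k × k) where
  mul := LinearMap.mk₂ k (fun a b => ((0 : k), a.1 * b.1))
    (by intro m₁ m₂ n; simp [add_mul, Prod.ext_iff])
    (by intro c m n; simp [Prod.ext_iff, smul_eq_mul]; ring)
    (by intro m n₁ n₂; simp [mul_add, Prod.ext_iff])
    (by intro c m n; simp [Prod.ext_iff, smul_eq_mul]; ring)
  comm := by intro a b; simp [LinearMap.mk₂_apply, mul_comm]
  four := by intro a; simp [LinearMap.mk₂_apply, Prod.ext_iff]

/-- The 4-algebra A₂ : e₁e₂ = e₂, e₁² = e₂² = 0. -/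
def a2Alg (k : Type*) [Field k] : FourAlgebra k (k × k) where
  mul := LinearMap.mk₂ k (fun a b => ((0 : k), a.1 * b.2 + a.2 * b.1))
    (by intro m₁ m₂ n; simp [add_mul, Prod.ext_iff]; ring)
    (by intro c m n; simp [Prod.ext_iff, smul_eq_mul]; ring)
    (by intro m n₁ n₂; simp [mul_add, Prod.ext_iff]; ring)
    (by intro c m n; simp [Prod.ext_iff, smul_eq_mul]; ring)
  comm := by intro a b; simp [LinearMap.mk₂_apply, Prod.ext_iff]; ring
  four := by intro a; simp [LinearMap.mk₂_apply, Prod.ext_iff]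

/-- Up to isomorphism there are exactly three 2-dimensional 4-algebras over a field
of characteristic ≠ 2: the abelian one, A₁ and A₂; and these three are pairwise
non-isomorphic. -/
theorem stmt4 (k : Type) [Field k] (h2 : (2 : k) ≠ 0) :
    (∀ (A : Type) (_ : AddCommGroup A) (_ : Module k A) (F : FourAlgebra k A),
      Module.finrank k A = 2 →
        (FourIso F (abAlg k) ∨ FourIso F (a1Alg k) ∨ FourIso F (a2Alg k))) ∧
    ¬ FourIso (abAlg k) (a1Alg k) ∧
    ¬ FourIso (abAlg k) (a2Alg k) ∧
    ¬ FourIso (a1Alg k) (a2Alg k) := by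
  refine ⟨?_, ?_, ?_, ?_⟩
  · intro A iA mA F hrank
    by_cases hq : ∀ a : A, F.mul a a = 0
    · left
      have hm : ∀ x y : A, F.mul x y = 0 := by
        intro x y
        have h := hq (x + y)
        simp only [map_add, LinearMap.add_apply, hq x, hq y, F.comm y x, zero_add, add_zero] at h
        have h2' : (2:k) • F.mul x y = 0 := by rw [two_smul]; exact h
        exact (smul_eq_zero.mp h2').resolve_left h2
      have : FiniteDimensional k A := .of_finrank_pos (by rw [hrank]; norm_num)
      have e := LinearEquiv.ofFinrankEq (R := k) A (k × k) (by simp [hrank])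
      exact ⟨e, fun x y => by simp [hm, abAlg]⟩
    · push_neg at hq
      obtain ⟨a, ha⟩ := hq
      set sq := F.mul a a with hsq
      clear_value sq
      have hss : F.mul sq sq = 0 := by have := F.four a; rwa [← hsq] at this
      have hind : ∀ s t : k, s • a + t • sq = 0 → s = 0 ∧ t = 0 := by
        intro s t hst
        by_cases hs : s = 0
        · subst hs
          simp only [zero_smul, zero_add, smul_eq_zero] at hst
          exact ⟨rfl, hst.resolve_right ha⟩
        · exfalso
          apply ha
          have hc : a = (s⁻¹ * -t) • sq := by
            have h1 : s • a = -(t • sq) := eq_neg_of_add_eq_zero_left hst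
            calc a = s⁻¹ • (s • a) := by rw [smul_smul, inv_mul_cancel₀ hs, one_smul]
            _ = s⁻¹ • -(t • sq) := by rw [h1]
            _ = (s⁻¹ * -t) • sq := by module
          calc sq = F.mul a a := hsq
          _ = F.mul ((s⁻¹ * -t) • sq) ((s⁻¹ * -t) • sq) := by rw [← hc]
          _ = ((s⁻¹ * -t) * (s⁻¹ * -t)) • F.mul sq sq := by
              simp only [map_smul, LinearMap.smul_apply, smul_smul]
          _ = 0 := by rw [hss, smul_zero]
      have hli : LinearIndependent k ![a, sq] := LinearIndependent.pair_iff.2 hind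
      obtain ⟨b, hb⟩ : ∃ b : Module.Basis (Fin 2) k A, ⇑b = ![a, sq] :=
        ⟨basisOfLinearIndependentOfCardEqFinrank hli (by simp [hrank]),
          coe_basisOfLinearIndependentOfCardEqFinrank _ _⟩
      have hb0 : b 0 = a := by rw [hb]; simp
      have hb1 : b 1 = sq := by rw [hb]; simp
      have hspan : ∀ x : A, ∃ s t : k, x = s • a + t • sq := by
        intro x
        refine ⟨b.repr x 0, b.repr x 1, ?_⟩
        have h := b.sum_repr x
        rw [Fin.sum_univ_two, hb0, hb1] at h
        exact h.symm
      obtain ⟨l, m, hlm⟩ := hspan (F.mul a sq)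
      have hsa : F.mul sq a = l • a + m • sq := by rw [F.comm, hlm]
      have haa : F.mul a a = sq := hsq.symm
      have prod : ∀ s t s' t' : k, F.mul (s•a+t•sq) (s'•a+t'•sq)
          = ((s*t'+t*s')*l) • a + (s*s' + (s*t'+t*s')*m) • sq := by
        intro s t s' t'
        simp only [map_add, map_smul, LinearMap.add_apply, LinearMap.smul_apply,
          haa, hlm, hsa, hss]
        module
      have four1 := F.four ((1:k)•a + (1:k)•sq)
      rw [prod 1 1 1 1, prod] at four1
      have e1 := (hind _ _ four1).1
      have four2 := F.four ((1:k)•a + (-1:k)•sq)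
      rw [prod 1 (-1) 1 (-1), prod] at four2
      have e2 := (hind _ _ four2).1
      have h8 : (8:k) ≠ 0 := by
        have h := mul_ne_zero (mul_ne_zero h2 h2) h2
        norm_num at h; exact h
      have hl : l = 0 := by
        have h : (8:k) * (l*l) = 0 := by linear_combination e1 - e2
        rcases mul_eq_zero.mp h with h | h
        · exact absurd h h8
        · exact mul_self_eq_zero.mp h
      subst hl
      by_cases hm0 : m = 0
      · subst hm0
        right; left
        refine ⟨b.equiv (Module.Basis.finTwoProd k) (Equiv.refl _), ?_⟩
        intro x y
        obtain ⟨s, t, hx⟩ := hspan x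
        obtain ⟨s', t', hy⟩ := hspan y
        have hea : b.equiv (Module.Basis.finTwoProd k) (Equiv.refl _) a = (1,0) := by
          rw [← hb0, Module.Basis.equiv_apply]; simp
        have heq : b.equiv (Module.Basis.finTwoProd k) (Equiv.refl _) sq = (0,1) := by
          rw [← hb1, Module.Basis.equiv_apply]; simp
        rw [hx, hy, prod]
        simp only [map_add, map_smul, hea, heq]
        simp [a1Alg, Prod.ext_iff]
        ring
      · right; right
        set f : A := m⁻¹ • a + (-(2⁻¹ * m⁻¹ * m⁻¹)) • sq with hf
        have him : m⁻¹ * m = 1 := inv_mul_cancel₀ hm0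
        have h2i : (2:k)⁻¹ * 2 = 1 := inv_mul_cancel₀ h2
        have hff : F.mul f f = 0 := by
          rw [hf, prod]
          match_scalars
          · ring
          · linear_combination (-(m⁻¹*m⁻¹)) * him + (-(m⁻¹*m⁻¹*m⁻¹*m)) * h2i
        have hfs : F.mul f sq = sq := by
          have h := prod m⁻¹ (-(2⁻¹ * m⁻¹ * m⁻¹)) 0 1
          rw [zero_smul, zero_add, one_smul] at h
          rw [hf, h]
          match_scalars
          · ring
          · linear_combination him
        have hind2 : ∀ s t : k, s • f + t • sq = 0 → s = 0 ∧ t = 0 := by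
          intro s t hst
          rw [hf] at hst
          have h' : (s * m⁻¹) • a + (s * (-(2⁻¹ * m⁻¹ * m⁻¹)) + t) • sq = 0 := by
            rw [← hst]; module
          obtain ⟨hh1, hh2⟩ := hind _ _ h'
          have hs : s = 0 := by
            rcases mul_eq_zero.mp hh1 with h|h
            · exact h
            · exact absurd h (inv_ne_zero hm0)
          subst hs; simpa using hh2
        have hli2 : LinearIndependent k ![f, sq] := LinearIndependent.pair_iff.2 hind2
        obtain ⟨b2, hb2⟩ : ∃ b2 : Module.Basis (Fin 2) k A, ⇑b2 = ![f, sq] :=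
          ⟨basisOfLinearIndependentOfCardEqFinrank hli2 (by simp [hrank]),
            coe_basisOfLinearIndependentOfCardEqFinrank _ _⟩
        have hb20 : b2 0 = f := by rw [hb2]; simp
        have hb21 : b2 1 = sq := by rw [hb2]; simp
        have hspan2 : ∀ x : A, ∃ s t : k, x = s • f + t • sq := by
          intro x
          refine ⟨b2.repr x 0, b2.repr x 1, ?_⟩
          have h := b2.sum_repr x
          rw [Fin.sum_univ_two, hb20, hb21] at h
          exact h.symm
        have hsf : F.mul sq f = sq := by rw [F.comm]; exact hfs
        have prodf : ∀ s t s' t' : k, F.mul (s•f+t•sq) (s'•f+t'•sq) = (s*t'+t*s') • sq := by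
          intro s t s' t'
          simp only [map_add, map_smul, LinearMap.add_apply, LinearMap.smul_apply,
            hff, hfs, hsf, hss]
          module
        refine ⟨b2.equiv (Module.Basis.finTwoProd k) (Equiv.refl _), ?_⟩
        intro x y
        obtain ⟨s, t, hx⟩ := hspan2 x
        obtain ⟨s', t', hy⟩ := hspan2 y
        have hef : b2.equiv (Module.Basis.finTwoProd k) (Equiv.refl _) f = (1,0) := by
          rw [← hb20, Module.Basis.equiv_apply]; simp
        have hes : b2.equiv (Module.Basis.finTwoProd k) (Equiv.refl _) sq = (0,1) := by
          rw [← hb21, Module.Basis.equiv_apply]; simp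
        rw [hx, hy, prodf]
        simp only [map_add, map_smul, hef, hes]
        simp [a2Alg, Prod.ext_iff]
        ring
  · rintro ⟨e, he⟩
    have h := he (e.symm (1,0)) (e.symm (1,0))
    simp [abAlg, a1Alg, Prod.ext_iff] at h
  · rintro ⟨e, he⟩
    have h := he (e.symm (1,0)) (e.symm (0,1))
    simp [abAlg, a2Alg, Prod.ext_iff] at h
  · rintro ⟨e, he⟩
    have h1 := he (e.symm (1,0)) (e.symm (0,1))
    have h2 := he (e.symm (1,0)) ((a1Alg k).mul (e.symm (1,0)) (e.symm (0,1)))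
    rw [h1] at h2
    simp [a1Alg, a2Alg, Prod.ext_iff] at h2
    rw [show ((0:k), (0:k)) = 0 from rfl, map_zero] at h2
    simp at h2
end

section
/- Given a 4-algebra A, a vector space V, and bilinear maps ▷ : A × V → V, f : A × A → V, ·_V : V × V → V, the product on V × A defined by (x,a)∘(y,b) = (x·_V y + a▷y + b▷x + f(a,b), a·b) makes V × A a 4-algebra if and only if: (CS1) (V, ·_V) is a 4-algebra and f is symmetric; (CS2) f(a²,a²) + f(a,a)·_V f(a,a) + 2 a²▷f(a,a) = 0 for all a ∈ A; (CS3) a²▷x² + x²·_V f(a,a) + 2 x²·_V (a▷x) + 2 (a▷x)² + 2 (a▷x)·_V f(a,a) + 2 a²▷(a▷x) = 0 for all a ∈ A, x ∈ V. -/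
namespace FourAlgebra

variable {k A V : Type*} [Field k] [AddCommGroup A] [Module k A] [AddCommGroup V] [Module k V]
  (FA : FourAlgebra k A) (tr : A →ₗ[k] V →ₗ[k] V) (f : A →ₗ[k] A →ₗ[k] V)
  (mv : V →ₗ[k] V →ₗ[k] V)

def crossedMul (z w : V × A) : V × A :=
  (mv z.1 w.1 + tr z.2 w.1 + tr w.2 z.1 + f z.2 w.2, FA.mul z.2 w.2)

def cs2Defect (a : A) : V :=
  f (FA.mul a a) (FA.mul a a) + mv (f a a) (f a a) + 2 • tr (FA.mul a a) (f a a)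

def cs3Defect (a : A) (x : V) : V :=
  tr (FA.mul a a) (mv x x) + mv (mv x x) (f a a) + 2 • mv (mv x x) (tr a x)
    + 2 • mv (tr a x) (tr a x) + 2 • mv (tr a x) (f a a) + 2 • tr (FA.mul a a) (tr a x)

@[simp]
lemma cs2Defect_zero : cs2Defect FA tr f mv 0 = 0 := by
  simp [cs2Defect]

@[simp]
lemma cs3Defect_zero_left (x : V) : cs3Defect FA tr f mv 0 x = 0 := by
  simp [cs3Defect]

@[simp]
lemma cs3Defect_zero_right (a : A) : cs3Defect FA tr f mv a 0 = 0 := by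
  simp [cs3Defect]

lemma crossedMul_comm_iff :
    (∀ z w, crossedMul FA tr f mv z w = crossedMul FA tr f mv w z) ↔
      (∀ x y : V, mv x y = mv y x) ∧ ∀ a b : A, f a b = f b a := by
  constructor
  · intro h
    exact ⟨fun x y ↦ by simpa [crossedMul] using congrArg Prod.fst (h (x, 0) (y, 0)),
      fun a b ↦ by simpa [crossedMul] using congrArg Prod.fst (h (0, a) (0, b))⟩
  · rintro ⟨hmv, hf⟩ z w
    refine Prod.ext ?_ (FA.comm z.2 w.2)
    simp only [crossedMul, hmv z.1, hf z.2]
    abel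

lemma fst_crossedMul_sq_sq (hmv : ∀ x y : V, mv x y = mv y x) (x : V) (a : A) :
    (crossedMul FA tr f mv (crossedMul FA tr f mv (x, a) (x, a))
        (crossedMul FA tr f mv (x, a) (x, a))).1 =
      mv (mv x x) (mv x x) + cs2Defect FA tr f mv a + 2 • cs3Defect FA tr f mv a x := by
  simp only [crossedMul, cs2Defect, cs3Defect, map_add, LinearMap.add_apply, two_nsmul, smul_add]
  rw [hmv (tr a x) (mv x x), hmv (f a a) (mv x x), hmv (f a a) (tr a x)]
  abel

lemma crossedMul_sq_sq_eq_zero_iff (h2 : (2 : k) ≠ 0) (hmv : ∀ x y : V, mv x y = mv y x) :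
    (∀ z, crossedMul FA tr f mv (crossedMul FA tr f mv z z) (crossedMul FA tr f mv z z) = 0) ↔
      (∀ x : V, mv (mv x x) (mv x x) = 0) ∧ (∀ a, cs2Defect FA tr f mv a = 0) ∧
        ∀ a x, cs3Defect FA tr f mv a x = 0 := by
  have hfst := fst_crossedMul_sq_sq FA tr f mv hmv
  constructor
  · intro h
    have hsum : ∀ x a, mv (mv x x) (mv x x) + cs2Defect FA tr f mv a
        + 2 • cs3Defect FA tr f mv a x = 0 := fun x a ↦ by
      rw [← hfst]
      exact congrArg Prod.fst (h (x, a))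
    have hV4 : ∀ x : V, mv (mv x x) (mv x x) = 0 := fun x ↦ by simpa using hsum x 0
    have hcs2 : ∀ a, cs2Defect FA tr f mv a = 0 := fun a ↦ by simpa using hsum 0 a
    refine ⟨hV4, hcs2, fun a x ↦ ?_⟩
    have h2x : (2 : k) • cs3Defect FA tr f mv a x = 0 := by
      simpa [ofNat_smul_eq_nsmul, hV4 x, hcs2 a] using hsum x a
    exact (smul_eq_zero.mp h2x).resolve_left h2
  · rintro ⟨hV4, hcs2, hcs3⟩ ⟨x, a⟩
    refine Prod.ext ?_ (FA.four a)
    rw [hfst, hV4, hcs2, hcs3]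
    simp

end FourAlgebra

open FourAlgebra in
/-- The crossed product multiplication on V × A is a 4-algebra structure iff the
axioms (CS1)-(CS3) hold. -/
theorem stmt7 (k A V : Type*) [Field k] [AddCommGroup A] [Module k A]
    [AddCommGroup V] [Module k V] (h2 : (2 : k) ≠ 0) (FA : FourAlgebra k A)
    (tr : A →ₗ[k] V →ₗ[k] V) (f : A →ₗ[k] A →ₗ[k] V) (mv : V →ₗ[k] V →ₗ[k] V) :
    let p : V × A → V × A → V × A := fun z w =>
      (mv z.1 w.1 + tr z.2 w.1 + tr w.2 z.1 + f z.2 w.2, FA.mul z.2 w.2)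
    ((∀ z w, p z w = p w z) ∧ (∀ z, p (p z z) (p z z) = 0)) ↔
      (((∀ x y : V, mv x y = mv y x) ∧ (∀ x : V, mv (mv x x) (mv x x) = 0) ∧
          (∀ a b : A, f a b = f b a)) ∧
       (∀ a : A, f (FA.mul a a) (FA.mul a a) + mv (f a a) (f a a)
          + 2 • tr (FA.mul a a) (f a a) = 0) ∧
       (∀ (a : A) (x : V), tr (FA.mul a a) (mv x x) + mv (mv x x) (f a a)
          + 2 • mv (mv x x) (tr a x) + 2 • mv (tr a x) (tr a x)
          + 2 • mv (tr a x) (f a a) + 2 • tr (FA.mul a a) (tr a x) = 0)) := by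
  show ((∀ z w, crossedMul FA tr f mv z w = crossedMul FA tr f mv w z) ∧ _) ↔ _
  rw [crossedMul_comm_iff]
  constructor
  · rintro ⟨⟨hmv, hf⟩, h4⟩
    obtain ⟨hV4, hcs2, hcs3⟩ := (crossedMul_sq_sq_eq_zero_iff FA tr f mv h2 hmv).1 h4
    exact ⟨⟨hmv, hV4, hf⟩, hcs2, hcs3⟩
  · rintro ⟨⟨hmv, hV4, hf⟩, hcs2, hcs3⟩
    exact ⟨⟨hmv, hf⟩, (crossedMul_sq_sq_eq_zero_iff FA tr f mv h2 hmv).2 ⟨hV4, hcs2, hcs3⟩⟩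
end

section
/- Let ▷ : A × V → V be a bilinear map with V given the trivial (zero) multiplication, and f = 0. Then V × A with multiplication (x,a)∘(y,b) = (a▷y + b▷x, a·b) is a 4-algebra if and only if a²▷(a▷x) = 0 for all a ∈ A and x ∈ V, i.e. if and only if (V, ▷) is an A-module. -/
/-!
Commutativity of `V × A` is inherited from `A`. For `z = (x, a)` one has `z ∘ z = (2 a ▷ x, a²)`,
so `(z ∘ z) ∘ (z ∘ z) = (4 a² ▷ (a ▷ x), a⁴)`; since `a⁴ = 0` in `A` and `4` is invertible, this
vanishes for all `z` exactly when `a² ▷ (a ▷ x) = 0` for all `a` and `x`.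
-/

section TrivialExtension

variable {k A V : Type*} [CommSemiring k] [AddCommMonoid A] [Module k A]
  [AddCommMonoid V] [Module k V] (μ : A →ₗ[k] A →ₗ[k] A) (tr : A →ₗ[k] V →ₗ[k] V)

def trivialExtMul (z w : V × A) : V × A :=
  (tr z.2 w.1 + tr w.2 z.1, μ z.2 w.2)

theorem trivialExtMul_comm (hμ : ∀ a b, μ a b = μ b a) (z w : V × A) :
    trivialExtMul μ tr z w = trivialExtMul μ tr w z :=
  Prod.ext (add_comm _ _) (hμ _ _)

theorem trivialExtMul_self (z : V × A) :
    trivialExtMul μ tr z z = ((2 : k) • tr z.2 z.1, μ z.2 z.2) := by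
  simp only [trivialExtMul, two_smul]

theorem fst_trivialExtMul_sq_sq (z : V × A) :
    (trivialExtMul μ tr (trivialExtMul μ tr z z) (trivialExtMul μ tr z z)).1 =
      (4 : k) • tr (μ z.2 z.2) (tr z.2 z.1) := by
  rw [trivialExtMul_self, trivialExtMul_self, map_smul, smul_smul]
  norm_num

end TrivialExtension

theorem trivialExtMul_sq_sq_eq_zero_iff {k A V : Type*} [Field k] [AddCommGroup A] [Module k A]
    [AddCommGroup V] [Module k V] (h2 : (2 : k) ≠ 0) (μ : A →ₗ[k] A →ₗ[k] A)
    (hμ : ∀ a, μ (μ a a) (μ a a) = 0) (tr : A →ₗ[k] V →ₗ[k] V) :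
    (∀ z, trivialExtMul μ tr (trivialExtMul μ tr z z) (trivialExtMul μ tr z z) = 0) ↔
      ∀ a x, tr (μ a a) (tr a x) = 0 := by
  have h4 : (4 : k) ≠ 0 := by
    rw [show (4 : k) = 2 * 2 by norm_num]
    exact mul_ne_zero h2 h2
  constructor
  · intro h a x
    have hx := congrArg Prod.fst (h (x, a))
    rw [fst_trivialExtMul_sq_sq] at hx
    exact (smul_eq_zero.mp hx).resolve_left h4
  · intro h z
    refine Prod.ext ?_ ?_
    · rw [fst_trivialExtMul_sq_sq, h, smul_zero, Prod.fst_zero]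
    · exact hμ z.2

/-- With trivial cocycle and trivial multiplication on V, the multiplication
(x,a)∘(y,b) = (a▷y + b▷x, a·b) on V × A is a 4-algebra structure iff
a²▷(a▷x) = 0 for all a, x, i.e. iff (V, ▷) is an A-module. -/
theorem stmt9 (k A V : Type*) [Field k] [AddCommGroup A] [Module k A]
    [AddCommGroup V] [Module k V] (h2 : (2 : k) ≠ 0) (FA : FourAlgebra k A)
    (tr : A →ₗ[k] V →ₗ[k] V) :
    let p : V × A → V × A → V × A := fun z w =>
      (tr z.2 w.1 + tr w.2 z.1, FA.mul z.2 w.2)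
    ((∀ z w, p z w = p w z) ∧ (∀ z, p (p z z) (p z z) = 0)) ↔
      (∀ (a : A) (x : V), tr (FA.mul a a) (tr a x) = 0) := by
  show ((∀ z w, trivialExtMul FA.mul tr z w = trivialExtMul FA.mul tr w z) ∧ _) ↔ _
  rw [← trivialExtMul_sq_sq_eq_zero_iff h2 FA.mul FA.four tr]
  exact and_iff_right (trivialExtMul_comm FA.mul tr FA.comm)
end

section
/- Let A be a 4-algebra, E a vector space, and π : E → A a surjective linear map with kernel V. If ·_E is a 4-algebra structure on E such that π is an algebra map, then E is isomorphic, as a 4-algebra, to a crossed product V # A; moreover, the isomorphism can be chosen to be the identity on V and to commute with the projections to A. -/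
/-!
A linear section `s` of `π` splits `E = ker π ⊕ s(A)`, so `(x, a) ↦ x + s a` is a linear
isomorphism `ker π × A ≃ E` fixing `ker π` and commuting with the projections. Since `π` is
multiplicative, `ker π` is an ideal, so `s a · y`, `x · y` and `s a · s b - s (a b)` all lie in
`ker π`; expanding `(x + s a)(y + s b)` and using commutativity for `x · s b = s b · x` gives
exactly the crossed product multiplication.
-/

namespace LinearMap

section RightInverse

variable {R M N : Type*} [Ring R] [AddCommGroup M] [Module R M] [AddCommGroup N] [Module R N]
  {π : M →ₗ[R] N} {s : N →ₗ[R] M}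

theorem apply_apply_of_comp_eq_id (hs : π ∘ₗ s = id) (a : N) : π (s a) = a :=
  congr_fun (congrArg DFunLike.coe hs) a

def kerProjOfRightInverse (hs : π ∘ₗ s = id) : M →ₗ[R] ker π :=
  codRestrict (ker π) (id - s ∘ₗ π) fun e => by
    simp [apply_apply_of_comp_eq_id hs]

theorem coe_kerProjOfRightInverse_apply (hs : π ∘ₗ s = id) (e : M) :
    (kerProjOfRightInverse hs e : M) = e - s (π e) :=
  rfl

theorem coe_kerProjOfRightInverse_of_mem_ker (hs : π ∘ₗ s = id) {e : M} (he : π e = 0) :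
    (kerProjOfRightInverse hs e : M) = e := by
  rw [coe_kerProjOfRightInverse_apply, he, map_zero, sub_zero]

def prodKerEquivOfRightInverse (hs : π ∘ₗ s = id) : (ker π × N) ≃ₗ[R] M :=
  LinearEquiv.ofLinearMap ((ker π).subtype.coprod s) ((kerProjOfRightInverse hs).prod π)
    (by ext e; simp [coe_kerProjOfRightInverse_apply])
    (by ext z <;> simp [coe_kerProjOfRightInverse_apply, apply_apply_of_comp_eq_id hs])

@[simp]
theorem prodKerEquivOfRightInverse_apply (hs : π ∘ₗ s = id) (z : ker π × N) :
    prodKerEquivOfRightInverse hs z = z.1 + s z.2 :=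
  rfl

end RightInverse

section CrossedProduct

variable {R M N : Type*} [CommRing R] [AddCommGroup M] [Module R M] [AddCommGroup N] [Module R N]
  {π : M →ₗ[R] N} {s : N →ₗ[R] M} (mulM : M →ₗ[R] M →ₗ[R] M) (mulN : N →ₗ[R] N →ₗ[R] N)
  (hs : π ∘ₗ s = id)

def sectionAction : N →ₗ[R] ker π →ₗ[R] ker π :=
  ((mulM ∘ₗ s).compl₂ (ker π).subtype).compr₂ (kerProjOfRightInverse hs)

def sectionCocycle : N →ₗ[R] N →ₗ[R] ker π :=
  ((mulM ∘ₗ s).compl₂ s - mulN.compr₂ s).compr₂ (kerProjOfRightInverse hs)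

def kerMul : ker π →ₗ[R] ker π →ₗ[R] ker π :=
  ((mulM ∘ₗ (ker π).subtype).compl₂ (ker π).subtype).compr₂ (kerProjOfRightInverse hs)

variable {mulM mulN}

theorem coe_sectionAction_apply
    (hπ : ∀ x y : M, π (mulM x y) = mulN (π x) (π y)) (a : N) (x : ker π) :
    (sectionAction mulM hs a x : M) = mulM (s a) x :=
  coe_kerProjOfRightInverse_of_mem_ker hs <| by simp [hπ]

theorem coe_sectionCocycle_apply
    (hπ : ∀ x y : M, π (mulM x y) = mulN (π x) (π y)) (a b : N) :
    (sectionCocycle mulM mulN hs a b : M) = mulM (s a) (s b) - s (mulN a b) :=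
  coe_kerProjOfRightInverse_of_mem_ker hs <| by simp [hπ, apply_apply_of_comp_eq_id hs]

theorem coe_kerMul_apply
    (hπ : ∀ x y : M, π (mulM x y) = mulN (π x) (π y)) (x y : ker π) :
    (kerMul mulM hs x y : M) = mulM x y :=
  coe_kerProjOfRightInverse_of_mem_ker hs <| by simp [hπ]

theorem prodKerEquivOfRightInverse_crossedMul
    (hπ : ∀ x y : M, π (mulM x y) = mulN (π x) (π y)) (hcomm : ∀ x y : M, mulM x y = mulM y x)
    (z w : ker π × N) :
    prodKerEquivOfRightInverse hs (kerMul mulM hs z.1 w.1 + sectionAction mulM hs z.2 w.1 +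
        sectionAction mulM hs w.2 z.1 + sectionCocycle mulM mulN hs z.2 w.2, mulN z.2 w.2) =
      mulM (prodKerEquivOfRightInverse hs z) (prodKerEquivOfRightInverse hs w) := by
  simp only [prodKerEquivOfRightInverse_apply, Submodule.coe_add,
    coe_kerMul_apply hs hπ, coe_sectionAction_apply hs hπ, coe_sectionCocycle_apply hs hπ,
    map_add, add_apply, hcomm (s w.2)]
  abel

end CrossedProduct

end LinearMap

/-- Any 4-algebra structure on E making a linear surjection π : E → A an algebra map is
isomorphic to a crossed product V # A with V = ker π, via an isomorphism stabilizing V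
and co-stabilizing A. -/
theorem stmt10 (k A E : Type*) [Field k] [AddCommGroup A] [Module k A]
    [AddCommGroup E] [Module k E]
    (FA : FourAlgebra k A) (FE : FourAlgebra k E)
    (π : E →ₗ[k] A) (hsurj : Function.Surjective π)
    (hπ : ∀ x y : E, π (FE.mul x y) = FA.mul (π x) (π y)) :
    ∃ (tr : A →ₗ[k] (LinearMap.ker π) →ₗ[k] (LinearMap.ker π))
      (f : A →ₗ[k] A →ₗ[k] (LinearMap.ker π))
      (mv : (LinearMap.ker π) →ₗ[k] (LinearMap.ker π) →ₗ[k] (LinearMap.ker π))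
      (φ : ((LinearMap.ker π) × A) ≃ₗ[k] E),
      (∀ z w : (LinearMap.ker π) × A,
        φ (mv z.1 w.1 + tr z.2 w.1 + tr w.2 z.1 + f z.2 w.2, FA.mul z.2 w.2)
          = FE.mul (φ z) (φ w)) ∧
      (∀ x : LinearMap.ker π, φ (x, 0) = (x : E)) ∧
      (∀ z : (LinearMap.ker π) × A, π (φ z) = z.2) := by
  obtain ⟨s, hs⟩ := π.exists_rightInverse_of_surjective (LinearMap.range_eq_top.2 hsurj)
  refine ⟨LinearMap.sectionAction FE.mul hs, LinearMap.sectionCocycle FE.mul FA.mul hs,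
    LinearMap.kerMul FE.mul hs, LinearMap.prodKerEquivOfRightInverse hs,
    LinearMap.prodKerEquivOfRightInverse_crossedMul hs hπ FE.comm, fun x => by simp,
    fun z => by simp [LinearMap.apply_apply_of_comp_eq_id hs]⟩
end

section
/- Every 4-algebra E is isomorphic to a twisted product V # A where V = E·E is the derived subalgebra (with its induced multiplication) and A = E/(E·E) carries the trivial (abelian) algebra structure. -/
namespace LinearMap

variable {R M N : Type*} [CommSemiring R] [AddCommMonoid M] [AddCommMonoid N] [Module R M]
  [Module R N]

theorem map_add_add_of_comm (μ : M →ₗ[R] M →ₗ[R] N) (hμ : ∀ a b, μ a b = μ b a) (x y u v : M) :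
    μ (x + u) (y + v) = μ x y + μ u y + μ v x + μ u v := by
  rw [map_add, map_add, add_apply, add_apply, hμ x v]
  abel

end LinearMap

namespace Submodule

variable {R E : Type*} [Ring R] [AddCommGroup E] [Module R E]

noncomputable def prodQuotientEquivOfRightInverse (V : Submodule R E) (s : E ⧸ V →ₗ[R] E)
    (hs : V.mkQ ∘ₗ s = .id) : (V × (E ⧸ V)) ≃ₗ[R] E :=
  ((LinearMap.exact_subtype_mkQ V).splitSurjectiveEquiv V.injective_subtype ⟨s, hs⟩).1.symm

@[simp]
theorem prodQuotientEquivOfRightInverse_apply (V : Submodule R E) (s : E ⧸ V →ₗ[R] E)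
    (hs : V.mkQ ∘ₗ s = .id) (z : V × (E ⧸ V)) :
    V.prodQuotientEquivOfRightInverse s hs z = z.1 + s z.2 := by
  simp only [prodQuotientEquivOfRightInverse, Function.Exact.splitSurjectiveEquiv,
    Equiv.coe_fn_mk, LinearEquiv.symm_symm]
  rfl

end Submodule

theorem stmt11_general (k E : Type*) [Field k] [AddCommGroup E] [Module k E]
    (F : FourAlgebra k E) :
    let V : Submodule k E := Submodule.span k {z : E | ∃ a b : E, z = F.mul a b}
    ∃ (mv : V →ₗ[k] V →ₗ[k] V) (tr : (E ⧸ V) →ₗ[k] V →ₗ[k] V)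
      (f : (E ⧸ V) →ₗ[k] (E ⧸ V) →ₗ[k] V),
      (∀ x y : V, ((mv x y : V) : E) = F.mul (x : E) (y : E)) ∧
      (∀ a b : E ⧸ V, f a b = f b a) ∧
      ∃ φ : (V × (E ⧸ V)) ≃ₗ[k] E,
        ∀ z w : V × (E ⧸ V),
          φ (mv z.1 w.1 + tr z.2 w.1 + tr w.2 z.1 + f z.2 w.2, 0) = F.mul (φ z) (φ w) := by
  intro V
  let μ : E →ₗ[k] E →ₗ[k] V := F.mul.codRestrict₂ V.subtype V.injective_subtype
    fun a b ↦ by rw [V.range_subtype]; exact Submodule.subset_span ⟨a, b, rfl⟩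
  have hμ (a b : E) : (μ a b : E) = F.mul a b :=
    F.mul.codRestrict₂_apply V.subtype V.injective_subtype _ a b
  obtain ⟨s, hs⟩ := V.mkQ.exists_rightInverse_of_surjective V.range_mkQ
  refine ⟨μ.compl₁₂ V.subtype V.subtype, (μ ∘ₗ s).compl₂ V.subtype, (μ ∘ₗ s).compl₂ s,
    fun x y ↦ hμ x y, fun a b ↦ Subtype.ext <| (hμ _ _).trans <| (F.comm _ _).trans (hμ _ _).symm,
    V.prodQuotientEquivOfRightInverse s hs, fun z w ↦ ?_⟩
  simp only [Submodule.prodQuotientEquivOfRightInverse_apply, F.mul.map_add_add_of_comm F.comm]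
  simp [hμ]

/-- Every 4-algebra E is isomorphic to a twisted product E' # (E/E'), where E' = E·E is
the derived subalgebra (with its induced multiplication) and E/E' carries the abelian
algebra structure. -/
theorem stmt11 (k E : Type*) [Field k] [AddCommGroup E] [Module k E]
    (h2 : (2 : k) ≠ 0) (F : FourAlgebra k E) :
    let V : Submodule k E := Submodule.span k {z : E | ∃ a b : E, z = F.mul a b}
    ∃ (mv : V →ₗ[k] V →ₗ[k] V) (tr : (E ⧸ V) →ₗ[k] V →ₗ[k] V)
      (f : (E ⧸ V) →ₗ[k] (E ⧸ V) →ₗ[k] V),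
      (∀ x y : V, ((mv x y : V) : E) = F.mul (x : E) (y : E)) ∧
      (∀ a b : E ⧸ V, f a b = f b a) ∧
      ∃ φ : (V × (E ⧸ V)) ≃ₗ[k] E,
        ∀ z w : V × (E ⧸ V),
          φ (mv z.1 w.1 + tr z.2 w.1 + tr w.2 z.1 + f z.2 w.2, 0) = F.mul (φ z) (φ w) :=
  stmt11_general k E F
end

section
/- Let (▷, f, ·_V) and (▷', f', ·_V') be crossed systems of a 4-algebra A by a vector space V with ·_V = ·_V'. A linear map ψ : V # A → V #' A of the form ψ(x,a) = (x + r(a), α(a)), with r : A → V linear and α : A → A linear, is an algebra morphism if and only if α is an algebra map and for all a, b ∈ A, x ∈ V: (M1) a▷x = α(a)▷'x + r(a)·_V x, and (M2) f(a,b) = f'(α(a),α(b)) + α(a)▷'r(b) + α(b)▷'r(a) + r(a)·_V r(b) − r(a·b). Moreover every algebra morphism ψ : V # A → V #' A that restricts to the identity on V has this form, and ψ is bijective iff α is bijective. -/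
namespace CrossedProduct

variable {R A V : Type*} [CommRing R] [AddCommGroup A] [Module R A] [AddCommGroup V] [Module R V]

def mul (mulA : A →ₗ[R] A →ₗ[R] A) (mv : V →ₗ[R] V →ₗ[R] V) (tr : A →ₗ[R] V →ₗ[R] V)
    (f : A →ₗ[R] A →ₗ[R] V) (z w : V × A) : V × A :=
  (mv z.1 w.1 + tr z.2 w.1 + tr w.2 z.1 + f z.2 w.2, mulA z.2 w.2)

def shearMap (r : A →ₗ[R] V) (α : A →ₗ[R] A) (z : V × A) : V × A :=
  (z.1 + r z.2, α z.2)

theorem mv_comm_of_mul_comm {mulA : A →ₗ[R] A →ₗ[R] A} {mv : V →ₗ[R] V →ₗ[R] V}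
    {tr : A →ₗ[R] V →ₗ[R] V} {f : A →ₗ[R] A →ₗ[R] V}
    (h : ∀ z w, mul mulA mv tr f z w = mul mulA mv tr f w z) (x y : V) : mv x y = mv y x := by
  simpa [mul] using congrArg Prod.fst (h (x, 0) (y, 0))

theorem shearMap_map_mul_iff {mulA : A →ₗ[R] A →ₗ[R] A} {mv : V →ₗ[R] V →ₗ[R] V}
    {tr tr' : A →ₗ[R] V →ₗ[R] V} {f f' : A →ₗ[R] A →ₗ[R] V} (hmv : ∀ x y, mv x y = mv y x)
    (r : A →ₗ[R] V) (α : A →ₗ[R] A) :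
    (∀ z w, shearMap r α (mul mulA mv tr f z w)
        = mul mulA mv tr' f' (shearMap r α z) (shearMap r α w)) ↔
      ((∀ a b, α (mulA a b) = mulA (α a) (α b)) ∧
       (∀ a x, tr a x = tr' (α a) x + mv (r a) x) ∧
       (∀ a b, f a b = f' (α a) (α b) + tr' (α a) (r b) + tr' (α b) (r a)
          + mv (r a) (r b) - r (mulA a b))) := by
  constructor
  · intro hψ
    refine ⟨fun a b => ?_, fun a x => ?_, fun a b => ?_⟩
    · simpa [mul, shearMap] using congrArg Prod.snd (hψ (0, a) (0, b))
    · have h := congrArg Prod.fst (hψ (0, a) (x, 0))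
      simp only [mul, shearMap, map_zero, LinearMap.zero_apply, add_zero, zero_add] at h
      rw [h]; abel
    · have h := congrArg Prod.fst (hψ (0, a) (0, b))
      simp only [mul, shearMap, map_zero, add_zero, zero_add] at h
      rw [eq_sub_iff_add_eq, h]; abel
  · rintro ⟨hα, hM1, hM2⟩ z w
    refine Prod.ext ?_ (hα z.2 w.2)
    simp only [mul, shearMap, map_add, LinearMap.add_apply]
    rw [hM1 z.2 w.1, hM1 w.2 z.1, hM2 z.2 w.2, hmv (r w.2) z.1]
    abel

theorem eq_shearMap_of_apply_inl (ψ : V × A →ₗ[R] V × A) (hψ : ∀ x, ψ (x, 0) = (x, 0)) :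
    ∃ (r : A →ₗ[R] V) (α : A →ₗ[R] A), ∀ z, ψ z = shearMap r α z := by
  refine ⟨LinearMap.fst R V A ∘ₗ ψ ∘ₗ LinearMap.inr R V A,
    LinearMap.snd R V A ∘ₗ ψ ∘ₗ LinearMap.inr R V A, fun z => ?_⟩
  have hsplit : ψ z = ψ (z.1, 0) + ψ (0, z.2) := by rw [← map_add, Prod.mk_add_mk]; simp
  rw [hsplit, hψ]
  ext <;> simp [shearMap]

theorem shearMap_bijective_iff (r : A →ₗ[R] V) (α : A →ₗ[R] A) :
    Function.Bijective (shearMap r α) ↔ Function.Bijective α := by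
  let e : V × A ≃ V × A :=
    { toFun := shearMap r LinearMap.id
      invFun := shearMap (-r) LinearMap.id
      left_inv := fun z => by simp [shearMap]
      right_inv := fun z => by simp [shearMap] }
  have hcomp : shearMap r α = Prod.map id α ∘ e := rfl
  rw [hcomp, Function.Bijective.of_comp_iff _ e.bijective, Prod.map_bijective]
  simp [Function.bijective_id]

end CrossedProduct

open CrossedProduct in
theorem stmt13_general (k A V : Type*) [Field k] [AddCommGroup A] [Module k A]
    [AddCommGroup V] [Module k V] (FA : FourAlgebra k A)
    (tr tr' : A →ₗ[k] V →ₗ[k] V) (f f' : A →ₗ[k] A →ₗ[k] V) (mv : V →ₗ[k] V →ₗ[k] V) :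
    let p : V × A → V × A → V × A := fun z w =>
      (mv z.1 w.1 + tr z.2 w.1 + tr w.2 z.1 + f z.2 w.2, FA.mul z.2 w.2)
    let p' : V × A → V × A → V × A := fun z w =>
      (mv z.1 w.1 + tr' z.2 w.1 + tr' w.2 z.1 + f' z.2 w.2, FA.mul z.2 w.2)
    -- (▷, f, ·_V) and (▷', f', ·_V) are crossed systems:
    ((∀ z w, p z w = p w z) ∧ (∀ z, p (p z z) (p z z) = 0)) →
    ((∀ z w, p' z w = p' w z) ∧ (∀ z, p' (p' z z) (p' z z) = 0)) →
    -- (i) ψ(x,a) = (x + r(a), α(a)) is a morphism iff α is an algebra map and (M1),(M2):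
    ((∀ (r : A →ₗ[k] V) (α : A →ₗ[k] A),
        (∀ z w : V × A,
            (fun z : V × A => (z.1 + r z.2, α z.2)) (p z w)
              = p' ((fun z : V × A => (z.1 + r z.2, α z.2)) z)
                   ((fun z : V × A => (z.1 + r z.2, α z.2)) w)) ↔
          ((∀ a b : A, α (FA.mul a b) = FA.mul (α a) (α b)) ∧
           (∀ (a : A) (x : V), tr a x = tr' (α a) x + mv (r a) x) ∧
           (∀ a b : A, f a b = f' (α a) (α b) + tr' (α a) (r b) + tr' (α b) (r a)
              + mv (r a) (r b) - r (FA.mul a b)))) ∧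
    -- (ii) every morphism stabilizing V has this form:
     (∀ ψ : V × A →ₗ[k] V × A,
        (∀ z w : V × A, ψ (p z w) = p' (ψ z) (ψ w)) →
        (∀ x : V, ψ (x, 0) = (x, 0)) →
        ∃ (r : A →ₗ[k] V) (α : A →ₗ[k] A), ∀ z : V × A, ψ z = (z.1 + r z.2, α z.2)) ∧
    -- (iii) ψ is bijective iff α is bijective:
     (∀ (r : A →ₗ[k] V) (α : A →ₗ[k] A),
        Function.Bijective (fun z : V × A => (z.1 + r z.2, α z.2)) ↔
          Function.Bijective α)) := by
  intro p p' hCS _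
  have hmv : ∀ x y, mv x y = mv y x := mv_comm_of_mul_comm (mulA := FA.mul) hCS.1
  exact ⟨shearMap_map_mul_iff hmv, fun ψ _ hψ => eq_shearMap_of_apply_inl ψ hψ,
    shearMap_bijective_iff⟩

/-- Characterization of morphisms between crossed products V # A and V #' A (same ·_V)
which stabilize V: they are of the form ψ(x,a) = (x + r(a), α(a)) with α an algebra map
and (M1), (M2) satisfied; and ψ is bijective iff α is. -/
theorem stmt13 (k A V : Type*) [Field k] [AddCommGroup A] [Module k A]
    [AddCommGroup V] [Module k V] (h2 : (2 : k) ≠ 0) (FA : FourAlgebra k A)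
    (tr tr' : A →ₗ[k] V →ₗ[k] V) (f f' : A →ₗ[k] A →ₗ[k] V) (mv : V →ₗ[k] V →ₗ[k] V) :
    let p : V × A → V × A → V × A := fun z w =>
      (mv z.1 w.1 + tr z.2 w.1 + tr w.2 z.1 + f z.2 w.2, FA.mul z.2 w.2)
    let p' : V × A → V × A → V × A := fun z w =>
      (mv z.1 w.1 + tr' z.2 w.1 + tr' w.2 z.1 + f' z.2 w.2, FA.mul z.2 w.2)
    -- (▷, f, ·_V) and (▷', f', ·_V) are crossed systems:
    ((∀ z w, p z w = p w z) ∧ (∀ z, p (p z z) (p z z) = 0)) →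
    ((∀ z w, p' z w = p' w z) ∧ (∀ z, p' (p' z z) (p' z z) = 0)) →
    -- (i) ψ(x,a) = (x + r(a), α(a)) is a morphism iff α is an algebra map and (M1),(M2):
    ((∀ (r : A →ₗ[k] V) (α : A →ₗ[k] A),
        (∀ z w : V × A,
            (fun z : V × A => (z.1 + r z.2, α z.2)) (p z w)
              = p' ((fun z : V × A => (z.1 + r z.2, α z.2)) z)
                   ((fun z : V × A => (z.1 + r z.2, α z.2)) w)) ↔
          ((∀ a b : A, α (FA.mul a b) = FA.mul (α a) (α b)) ∧
           (∀ (a : A) (x : V), tr a x = tr' (α a) x + mv (r a) x) ∧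
           (∀ a b : A, f a b = f' (α a) (α b) + tr' (α a) (r b) + tr' (α b) (r a)
              + mv (r a) (r b) - r (FA.mul a b)))) ∧
    -- (ii) every morphism stabilizing V has this form:
     (∀ ψ : V × A →ₗ[k] V × A,
        (∀ z w : V × A, ψ (p z w) = p' (ψ z) (ψ w)) →
        (∀ x : V, ψ (x, 0) = (x, 0)) →
        ∃ (r : A →ₗ[k] V) (α : A →ₗ[k] A), ∀ z : V × A, ψ z = (z.1 + r z.2, α z.2)) ∧
    -- (iii) ψ is bijective iff α is bijective:
     (∀ (r : A →ₗ[k] V) (α : A →ₗ[k] A),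
        Function.Bijective (fun z : V × A => (z.1 + r z.2, α z.2)) ↔
          Function.Bijective α)) :=
  stmt13_general k A V FA tr tr' f f' mv
end

section
/- Let A be a 4-algebra and V a vector space. The set 𝒢 of pairs (r, α) with r : A → V linear and α an algebra automorphism of A, satisfying a▷x = α(a)▷x + r(a)·_V x and f(a,b) = f(α(a),α(b)) + α(a)▷r(b) + α(b)▷r(a) + r(a)·_V r(b) − r(a·b) for all a,b ∈ A, x ∈ V, is a group under (r,α)•(r',α') := (r' + r∘α', α∘α'), and it is a subgroup of the semidirect product Hom_k(A,V) ⋉ GL_k(A). -/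
section CompatiblePairs

variable {k A V : Type*} [CommRing k] [AddCommGroup A] [Module k A] [AddCommGroup V] [Module k V]
  (μ : A →ₗ[k] A →ₗ[k] A) (tr : A →ₗ[k] V →ₗ[k] V) (f : A →ₗ[k] A →ₗ[k] V)
  (mv : V →ₗ[k] V →ₗ[k] V)

theorem mv_comm_of_crossed_product_comm
    (hcomm : ∀ z w : V × A,
      ((mv z.1 w.1 + tr z.2 w.1 + tr w.2 z.1 + f z.2 w.2, μ z.2 w.2) : V × A)
        = (mv w.1 z.1 + tr w.2 z.1 + tr z.2 w.1 + f w.2 z.2, μ w.2 z.2))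
    (u v : V) : mv u v = mv v u := by
  simpa using congrArg Prod.fst (hcomm (u, 0) (v, 0))

def compatiblePairs : Set ((A →ₗ[k] V) × (A ≃ₗ[k] A)) := {q |
  (∀ a b : A, q.2 (μ a b) = μ (q.2 a) (q.2 b)) ∧
  (∀ (a : A) (x : V), tr a x = tr (q.2 a) x + mv (q.1 a) x) ∧
  (∀ a b : A, f a b = f (q.2 a) (q.2 b) + tr (q.2 a) (q.1 b) + tr (q.2 b) (q.1 a)
    + mv (q.1 a) (q.1 b) - q.1 (μ a b))}

variable {μ tr f mv}

theorem zero_refl_mem_compatiblePairs :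
    ((0 : A →ₗ[k] V), LinearEquiv.refl k A) ∈ compatiblePairs μ tr f mv :=
  ⟨fun _ _ => rfl, fun _ _ => by simp, fun _ _ => by simp⟩

theorem symm_map_mul_of_map_mul {α : A ≃ₗ[k] A} (hα : ∀ a b, α (μ a b) = μ (α a) (α b))
    (a b : A) : α.symm (μ a b) = μ (α.symm a) (α.symm b) :=
  α.injective (by simp [hα])

theorem mul_mem_compatiblePairs (hmv : ∀ u v : V, mv u v = mv v u)
    {r r' : A →ₗ[k] V} {α α' : A ≃ₗ[k] A}
    (h : (r, α) ∈ compatiblePairs μ tr f mv) (h' : (r', α') ∈ compatiblePairs μ tr f mv) :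
    (r' + r.comp (α' : A →ₗ[k] A), α'.trans α) ∈ compatiblePairs μ tr f mv := by
  obtain ⟨hα, htr, hf⟩ := h
  obtain ⟨hα', htr', hf'⟩ := h'
  refine ⟨fun a b => by simp [hα', hα], fun a x => ?_, fun a b => ?_⟩
  · rw [htr' a x, htr (α' a) x]
    simp only [LinearEquiv.trans_apply, LinearMap.add_apply, LinearMap.coe_comp,
      Function.comp_apply, LinearEquiv.coe_coe, map_add]
    abel
  · rw [hf' a b, hf (α' a) (α' b), htr (α' a) (r' b), htr (α' b) (r' a)]
    simp only [LinearEquiv.trans_apply, LinearMap.add_apply, LinearMap.coe_comp,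
      Function.comp_apply, LinearEquiv.coe_coe, map_add, hα']
    rw [hmv (r (α' b)) (r' a)]
    abel

theorem inv_mem_compatiblePairs (hmv : ∀ u v : V, mv u v = mv v u)
    {r : A →ₗ[k] V} {α : A ≃ₗ[k] A} (h : (r, α) ∈ compatiblePairs μ tr f mv) :
    (-(r.comp (α.symm : A →ₗ[k] A)), α.symm) ∈ compatiblePairs μ tr f mv := by
  obtain ⟨hα, htr, hf⟩ := h
  -- Every condition is read at `α⁻¹ a`, `α⁻¹ b`, where `α` cancels.
  have htr_symm (a : A) (x : V) : tr (α.symm a) x = tr a x + mv (r (α.symm a)) x := by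
    simpa using htr (α.symm a) x
  have hf_symm (a b : A) : f (α.symm a) (α.symm b) = f a b + tr a (r (α.symm b))
      + tr b (r (α.symm a)) + mv (r (α.symm a)) (r (α.symm b))
      - r (α.symm (μ a b)) := by
    simpa [symm_map_mul_of_map_mul hα] using hf (α.symm a) (α.symm b)
  refine ⟨symm_map_mul_of_map_mul hα, fun a x => ?_, fun a b => ?_⟩
  · simp only [htr_symm, LinearMap.neg_apply, LinearMap.coe_comp, Function.comp_apply,
      LinearEquiv.coe_coe, map_neg]
    abel
  · simp only [hf_symm, htr_symm, LinearMap.neg_apply, LinearMap.coe_comp,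
      Function.comp_apply, LinearEquiv.coe_coe, map_neg]
    rw [hmv (r (α.symm b)) (r (α.symm a))]
    abel

end CompatiblePairs

theorem stmt15_general (k A V : Type*) [Field k] [AddCommGroup A] [Module k A]
    [AddCommGroup V] [Module k V] (FA : FourAlgebra k A)
    (tr : A →ₗ[k] V →ₗ[k] V) (f : A →ₗ[k] A →ₗ[k] V) (mv : V →ₗ[k] V →ₗ[k] V)
    -- (▷, f, ·_V) is a crossed system, i.e. V # A is a 4-algebra:
    (hcomm : ∀ z w : V × A,
      ((mv z.1 w.1 + tr z.2 w.1 + tr w.2 z.1 + f z.2 w.2, FA.mul z.2 w.2) : V × A)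
        = (mv w.1 z.1 + tr w.2 z.1 + tr z.2 w.1 + f w.2 z.2, FA.mul w.2 z.2)) :
    let G : Set ((A →ₗ[k] V) × (A ≃ₗ[k] A)) := {q |
      (∀ a b : A, q.2 (FA.mul a b) = FA.mul (q.2 a) (q.2 b)) ∧
      (∀ (a : A) (x : V), tr a x = tr (q.2 a) x + mv (q.1 a) x) ∧
      (∀ a b : A, f a b = f (q.2 a) (q.2 b) + tr (q.2 a) (q.1 b) + tr (q.2 b) (q.1 a)
        + mv (q.1 a) (q.1 b) - q.1 (FA.mul a b))}
    ((0 : A →ₗ[k] V), LinearEquiv.refl k A) ∈ G ∧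
    (∀ q q' : (A →ₗ[k] V) × (A ≃ₗ[k] A), q ∈ G → q' ∈ G →
      ((q'.1 + q.1.comp (q'.2 : A →ₗ[k] A), q'.2.trans q.2) ∈ G)) ∧
    (∀ q : (A →ₗ[k] V) × (A ≃ₗ[k] A), q ∈ G →
      ((-(q.1.comp (q.2.symm : A →ₗ[k] A)), q.2.symm) ∈ G)) := by
  intro G
  rw [show G = compatiblePairs FA.mul tr f mv from rfl]
  have hmv := mv_comm_of_crossed_product_comm FA.mul tr f mv hcomm
  exact ⟨zero_refl_mem_compatiblePairs, fun _ _ h h' => mul_mem_compatiblePairs hmv h h',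
    fun _ h => inv_mem_compatiblePairs hmv h⟩

/-- The set 𝒢 of pairs (r, α), with α an algebra automorphism of A satisfying the two
compatibility equations, is a subgroup of the semidirect product Hom_k(A,V) ⋉ GL_k(A)
with multiplication (r,α)•(r',α') = (r' + r∘α', α∘α'): it contains the identity (0, id)
and is closed under this multiplication and under inverses. -/
theorem stmt15 (k A V : Type*) [Field k] [AddCommGroup A] [Module k A]
    [AddCommGroup V] [Module k V] (h2 : (2 : k) ≠ 0) (FA : FourAlgebra k A)
    (tr : A →ₗ[k] V →ₗ[k] V) (f : A →ₗ[k] A →ₗ[k] V) (mv : V →ₗ[k] V →ₗ[k] V)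
    -- (▷, f, ·_V) is a crossed system, i.e. V # A is a 4-algebra:
    (hcomm : ∀ z w : V × A,
      ((mv z.1 w.1 + tr z.2 w.1 + tr w.2 z.1 + f z.2 w.2, FA.mul z.2 w.2) : V × A)
        = (mv w.1 z.1 + tr w.2 z.1 + tr z.2 w.1 + f w.2 z.2, FA.mul w.2 z.2))
    (hfour : ∀ z : V × A,
      (fun u v : V × A =>
          ((mv u.1 v.1 + tr u.2 v.1 + tr v.2 u.1 + f u.2 v.2, FA.mul u.2 v.2) : V × A))
        ((fun u v : V × A =>
          ((mv u.1 v.1 + tr u.2 v.1 + tr v.2 u.1 + f u.2 v.2, FA.mul u.2 v.2) : V × A)) z z)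
        ((fun u v : V × A =>
          ((mv u.1 v.1 + tr u.2 v.1 + tr v.2 u.1 + f u.2 v.2, FA.mul u.2 v.2) : V × A)) z z)
        = 0) :
    let G : Set ((A →ₗ[k] V) × (A ≃ₗ[k] A)) := {q |
      (∀ a b : A, q.2 (FA.mul a b) = FA.mul (q.2 a) (q.2 b)) ∧
      (∀ (a : A) (x : V), tr a x = tr (q.2 a) x + mv (q.1 a) x) ∧
      (∀ a b : A, f a b = f (q.2 a) (q.2 b) + tr (q.2 a) (q.1 b) + tr (q.2 b) (q.1 a)
        + mv (q.1 a) (q.1 b) - q.1 (FA.mul a b))}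
    ((0 : A →ₗ[k] V), LinearEquiv.refl k A) ∈ G ∧
    (∀ q q' : (A →ₗ[k] V) × (A ≃ₗ[k] A), q ∈ G → q' ∈ G →
      ((q'.1 + q.1.comp (q'.2 : A →ₗ[k] A), q'.2.trans q.2) ∈ G)) ∧
    (∀ q : (A →ₗ[k] V) × (A ≃ₗ[k] A), q ∈ G →
      ((-(q.1.comp (q.2.symm : A →ₗ[k] A)), q.2.symm) ∈ G)) :=
  stmt15_general k A V FA tr f mv hcomm
end

section
/- Let (▷, f, ·_V) be a crossed system of a 4-algebra A by V. The map ϑ sending (r, α) ∈ 𝒢 to the automorphism (x,a) ↦ (x + r(a), α(a)) of V # A is a group isomorphism from (𝒢, •) onto the Galois group Gal(V # A / V) of all 4-algebra automorphisms of V # A that fix V pointwise. -/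
/-!
Every automorphism `φ` of `V × A` fixing `V` pointwise is a shear `(x, a) ↦ (x + r a, α a)`
with `r = fst ∘ φ ∘ inr` and `α = snd ∘ φ ∘ inr`; `α` is bijective because `φ` is.
Evaluating multiplicativity of a shear on the pairs `((x, 0), (0, a))` and `((0, a), (0, b))`
gives exactly the three equations defining `𝒢`, and conversely these equations give
multiplicativity by bilinearity. Composition of shears is the multiplication of `𝒢`.
-/

section Shear

variable {R V A : Type*} [Semiring R] [AddCommGroup V] [Module R V] [AddCommGroup A] [Module R A]

def shearEquiv (r : A →ₗ[R] V) (α : A ≃ₗ[R] A) : (V × A) ≃ₗ[R] (V × A) where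
  toFun z := (z.1 + r z.2, α z.2)
  invFun z := (z.1 - r (α.symm z.2), α.symm z.2)
  map_add' z w := by
    refine Prod.ext ?_ (map_add α _ _)
    simp only [Prod.fst_add, Prod.snd_add, map_add]
    abel
  map_smul' c z := by simp [smul_add]
  left_inv z := by simp
  right_inv z := by simp

@[simp]
theorem shearEquiv_apply (r : A →ₗ[R] V) (α : A ≃ₗ[R] A) (z : V × A) :
    shearEquiv r α z = (z.1 + r z.2, α z.2) :=
  rfl

theorem shearEquiv_inl (r : A →ₗ[R] V) (α : A ≃ₗ[R] A) (x : V) :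
    shearEquiv r α (x, 0) = (x, 0) := by
  simp

theorem shearEquiv_trans (r r' : A →ₗ[R] V) (α α' : A ≃ₗ[R] A) :
    (shearEquiv r' α').trans (shearEquiv r α)
      = shearEquiv (r' + r.comp (α' : A →ₗ[R] A)) (α'.trans α) := by
  ext z <;> simp [add_assoc]

theorem shearEquiv_injective {r r' : A →ₗ[R] V} {α α' : A ≃ₗ[R] A}
    (h : shearEquiv r α = shearEquiv r' α') : r = r' ∧ α = α' := by
  have hz (a : A) : shearEquiv r α (0, a) = shearEquiv r' α' (0, a) := by rw [h]
  refine ⟨LinearMap.ext fun a => ?_, LinearEquiv.ext fun a => ?_⟩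
  · simpa using congrArg Prod.fst (hz a)
  · simpa using congrArg Prod.snd (hz a)

theorem exists_eq_shearEquiv {φ : (V × A) ≃ₗ[R] (V × A)} (hφ : ∀ x : V, φ (x, 0) = (x, 0)) :
    ∃ (r : A →ₗ[R] V) (α : A ≃ₗ[R] A), φ = shearEquiv r α := by
  let ψ : A →ₗ[R] V × A := φ.toLinearMap.comp (LinearMap.inr R V A)
  let r : A →ₗ[R] V := (LinearMap.fst R V A).comp ψ
  let αm : A →ₗ[R] A := (LinearMap.snd R V A).comp ψ
  have hφ_eq (z : V × A) : φ z = (z.1 + r z.2, αm z.2) := by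
    conv_lhs => rw [← Prod.fst_add_snd z, map_add, hφ]
    exact Prod.ext rfl (zero_add _)
  have hα_inj : Function.Injective αm := by
    intro a b hab
    have hφab : φ (0, a - b) = φ (r (a - b), 0) := by
      rw [hφ_eq, hφ, map_sub αm, hab, sub_self, zero_add]
    simpa [sub_eq_zero] using congrArg Prod.snd (φ.injective hφab)
  have hα_surj : Function.Surjective αm := by
    intro b
    obtain ⟨z, hz⟩ := φ.surjective (0, b)
    exact ⟨z.2, by simpa [hφ_eq] using congrArg Prod.snd hz⟩
  exact ⟨r, LinearEquiv.ofBijective αm ⟨hα_inj, hα_surj⟩, LinearEquiv.ext hφ_eq⟩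

end Shear

section CrossedProduct

variable {R V A : Type*} [CommRing R] [AddCommGroup V] [Module R V] [AddCommGroup A] [Module R A]
  (mA : A →ₗ[R] A →ₗ[R] A) (tr : A →ₗ[R] V →ₗ[R] V) (f : A →ₗ[R] A →ₗ[R] V)
  (mv : V →ₗ[R] V →ₗ[R] V)

def crossedMul (z w : V × A) : V × A :=
  (mv z.1 w.1 + tr z.2 w.1 + tr w.2 z.1 + f z.2 w.2, mA z.2 w.2)

variable {mA tr f mv} in
theorem mv_comm_of_crossedMul_comm
    (hcomm : ∀ z w : V × A, crossedMul mA tr f mv z w = crossedMul mA tr f mv w z) (x y : V) :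
    mv x y = mv y x := by
  simpa [crossedMul] using congrArg Prod.fst (hcomm (x, 0) (y, 0))

theorem shearEquiv_map_crossedMul_iff (hmv : ∀ x y : V, mv x y = mv y x)
    (r : A →ₗ[R] V) (α : A ≃ₗ[R] A) :
    (∀ z w, shearEquiv r α (crossedMul mA tr f mv z w)
        = crossedMul mA tr f mv (shearEquiv r α z) (shearEquiv r α w)) ↔
      (∀ a b : A, α (mA a b) = mA (α a) (α b)) ∧
      (∀ (a : A) (x : V), tr a x = tr (α a) x + mv (r a) x) ∧
      (∀ a b : A, f a b = f (α a) (α b) + tr (α a) (r b) + tr (α b) (r a)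
        + mv (r a) (r b) - r (mA a b)) := by
  constructor
  · intro h
    have hA (a b : A) := h (0, a) (0, b)
    simp only [crossedMul, shearEquiv_apply, Prod.mk.injEq, map_zero, zero_add,
      add_zero] at hA
    refine ⟨fun a b => (hA a b).2, fun a x => ?_, fun a b => eq_sub_of_add_eq ?_⟩
    · have hVA := congrArg Prod.fst (h (x, 0) (0, a))
      simp only [crossedMul, shearEquiv_apply, map_zero, LinearMap.zero_apply, add_zero,
        zero_add] at hVA
      rw [hVA, hmv x (r a)]
      abel
    · rw [(hA a b).1]
      abel
  · rintro ⟨hα, htr, hf⟩ ⟨x, a⟩ ⟨y, b⟩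
    refine Prod.ext ?_ (hα a b)
    simp only [crossedMul, shearEquiv_apply, map_add, LinearMap.add_apply]
    rw [htr a y, htr b x, hf a b, hmv (r b) x]
    abel

end CrossedProduct

theorem stmt16_general (k A V : Type*) [Field k] [AddCommGroup A] [Module k A]
    [AddCommGroup V] [Module k V] (FA : FourAlgebra k A)
    (tr : A →ₗ[k] V →ₗ[k] V) (f : A →ₗ[k] A →ₗ[k] V) (mv : V →ₗ[k] V →ₗ[k] V) :
    let p : V × A → V × A → V × A := fun z w =>
      (mv z.1 w.1 + tr z.2 w.1 + tr w.2 z.1 + f z.2 w.2, FA.mul z.2 w.2)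
    -- (▷, f, ·_V) is a crossed system:
    ((∀ z w, p z w = p w z) ∧ (∀ z, p (p z z) (p z z) = 0)) →
    -- the group 𝒢:
    let G : Set ((A →ₗ[k] V) × (A ≃ₗ[k] A)) := {q |
      (∀ a b : A, q.2 (FA.mul a b) = FA.mul (q.2 a) (q.2 b)) ∧
      (∀ (a : A) (x : V), tr a x = tr (q.2 a) x + mv (q.1 a) x) ∧
      (∀ a b : A, f a b = f (q.2 a) (q.2 b) + tr (q.2 a) (q.1 b) + tr (q.2 b) (q.1 a)
        + mv (q.1 a) (q.1 b) - q.1 (FA.mul a b))}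
    -- the Galois group Gal(V # A / V):
    let Gal : Set ((V × A) ≃ₗ[k] (V × A)) := {φ |
      (∀ z w : V × A, φ (p z w) = p (φ z) (φ w)) ∧ (∀ x : V, φ (x, 0) = ((x, 0) : V × A))}
    ∃ ϑ : G → Gal,
      Function.Bijective ϑ ∧
      -- ϑ is given by the stated formula:
      (∀ q : G, ∀ z : V × A, (ϑ q : (V × A) ≃ₗ[k] (V × A)) z
          = (z.1 + q.1.1 z.2, q.1.2 z.2)) ∧
      -- ϑ is a group homomorphism: ϑ((r,α)•(r',α')) = ϑ(r,α) ∘ ϑ(r',α'):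
      (∀ q q' : G,
        ∀ h : ((q'.1.1 + q.1.1.comp (q'.1.2 : A →ₗ[k] A), q'.1.2.trans q.1.2)
                 : (A →ₗ[k] V) × (A ≃ₗ[k] A)) ∈ G,
        (ϑ ⟨(q'.1.1 + q.1.1.comp (q'.1.2 : A →ₗ[k] A), q'.1.2.trans q.1.2), h⟩
            : (V × A) ≃ₗ[k] (V × A))
          = ((ϑ q' : (V × A) ≃ₗ[k] (V × A)).trans (ϑ q : (V × A) ≃ₗ[k] (V × A)))) := by
  intro p hp G Gal
  have hmv := mv_comm_of_crossedMul_comm hp.1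
  have hmul := shearEquiv_map_crossedMul_iff FA.mul tr f mv hmv
  refine ⟨fun q => ⟨shearEquiv q.1.1 q.1.2, (hmul _ _).2 q.2, shearEquiv_inl _ _⟩,
    ⟨?_, ?_⟩, fun _ _ => rfl, fun q q' _ => (shearEquiv_trans ..).symm⟩
  · rintro ⟨⟨r, α⟩, _⟩ ⟨⟨r', α'⟩, _⟩ h
    obtain ⟨rfl, rfl⟩ := shearEquiv_injective (congrArg Subtype.val h)
    rfl
  · rintro ⟨φ, hφp, hφV⟩
    obtain ⟨r, α, rfl⟩ := exists_eq_shearEquiv hφV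
    exact ⟨⟨(r, α), (hmul r α).1 hφp⟩, rfl⟩

/-- The map ϑ(r,α) : (x,a) ↦ (x + r(a), α(a)) is a group isomorphism from the group
𝒢 = 𝒢_A^V(▷,f,·_V) (with multiplication (r,α)•(r',α') = (r'+r∘α', α∘α')) onto the Galois
group Gal(V # A / V) of 4-algebra automorphisms of the crossed product V # A fixing V
pointwise (with composition as multiplication). -/
theorem stmt16 (k A V : Type*) [Field k] [AddCommGroup A] [Module k A]
    [AddCommGroup V] [Module k V] (h2 : (2 : k) ≠ 0) (FA : FourAlgebra k A)
    (tr : A →ₗ[k] V →ₗ[k] V) (f : A →ₗ[k] A →ₗ[k] V) (mv : V →ₗ[k] V →ₗ[k] V) :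
    let p : V × A → V × A → V × A := fun z w =>
      (mv z.1 w.1 + tr z.2 w.1 + tr w.2 z.1 + f z.2 w.2, FA.mul z.2 w.2)
    -- (▷, f, ·_V) is a crossed system:
    ((∀ z w, p z w = p w z) ∧ (∀ z, p (p z z) (p z z) = 0)) →
    -- the group 𝒢:
    let G : Set ((A →ₗ[k] V) × (A ≃ₗ[k] A)) := {q |
      (∀ a b : A, q.2 (FA.mul a b) = FA.mul (q.2 a) (q.2 b)) ∧
      (∀ (a : A) (x : V), tr a x = tr (q.2 a) x + mv (q.1 a) x) ∧
      (∀ a b : A, f a b = f (q.2 a) (q.2 b) + tr (q.2 a) (q.1 b) + tr (q.2 b) (q.1 a)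
        + mv (q.1 a) (q.1 b) - q.1 (FA.mul a b))}
    -- the Galois group Gal(V # A / V):
    let Gal : Set ((V × A) ≃ₗ[k] (V × A)) := {φ |
      (∀ z w : V × A, φ (p z w) = p (φ z) (φ w)) ∧ (∀ x : V, φ (x, 0) = ((x, 0) : V × A))}
    ∃ ϑ : G → Gal,
      Function.Bijective ϑ ∧
      -- ϑ is given by the stated formula:
      (∀ q : G, ∀ z : V × A, (ϑ q : (V × A) ≃ₗ[k] (V × A)) z
          = (z.1 + q.1.1 z.2, q.1.2 z.2)) ∧
      -- ϑ is a group homomorphism: ϑ((r,α)•(r',α')) = ϑ(r,α) ∘ ϑ(r',α'):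
      (∀ q q' : G,
        ∀ h : ((q'.1.1 + q.1.1.comp (q'.1.2 : A →ₗ[k] A), q'.1.2.trans q.1.2)
                 : (A →ₗ[k] V) × (A ≃ₗ[k] A)) ∈ G,
        (ϑ ⟨(q'.1.1 + q.1.1.comp (q'.1.2 : A →ₗ[k] A), q'.1.2.trans q.1.2), h⟩
            : (V × A) ≃ₗ[k] (V × A))
          = ((ϑ q' : (V × A) ≃ₗ[k] (V × A)).trans (ϑ q : (V × A) ≃ₗ[k] (V × A)))) :=
  stmt16_general k A V FA tr f mv
end

section
/- Let A be a 4-algebra. There is a bijection between crossed systems of A by the 1-dimensional space k and the set of pairs (λ, f) where λ : A → k is linear and f : A × A → k is a symmetric bilinear form satisfying f(a²,a²) + 2λ(a²)f(a,a) = 0 and λ(a)λ(a²) = 0 for all a ∈ A; the corresponding crossed product is k × A with multiplication (x,a)∘(y,b) = (λ(a)y + λ(b)x + f(a,b), a·b), and this multiplication makes k × A a 4-algebra exactly under these conditions. -/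
section CrossedProduct

variable {k A : Type*} [CommRing k]

def crossedProductMul (lam : A → k) (f : A → A → k) (mul : A → A → A) (z w : k × A) : k × A :=
  (lam z.2 * w.1 + lam w.2 * z.1 + f z.2 w.2, mul z.2 w.2)

theorem crossedProductMul_comm_iff (lam : A → k) (f : A → A → k) {mul : A → A → A}
    (hmul : ∀ a b, mul a b = mul b a) :
    (∀ z w, crossedProductMul lam f mul z w = crossedProductMul lam f mul w z) ↔
      ∀ a b, f a b = f b a := by
  constructor
  · intro h a b
    simpa [crossedProductMul] using congrArg Prod.fst (h (0, a) (0, b))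
  · intro hf z w
    simp only [crossedProductMul, Prod.mk.injEq, hf z.2, hmul z.2]
    exact ⟨by ring, trivial⟩

theorem fst_crossedProductMul_sq_sq (lam : A → k) (f : A → A → k) (mul : A → A → A) (x : k)
    (a : A) :
    let sq := fun z => crossedProductMul lam f mul z z
    (sq (sq (x, a))).1 =
      f (mul a a) (mul a a) + 2 * (lam (mul a a) * f a a) + 4 * x * (lam a * lam (mul a a)) := by
  simp only [crossedProductMul]
  ring

theorem crossedProductMul_sq_sq_eq_zero_iff [NoZeroDivisors k] [Zero A] (h2 : (2 : k) ≠ 0)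
    (lam : A → k) (f : A → A → k) {mul : A → A → A} (hmul : ∀ a, mul (mul a a) (mul a a) = 0) :
    let sq := fun z => crossedProductMul lam f mul z z
    (∀ z, sq (sq z) = 0) ↔
      (∀ a, f (mul a a) (mul a a) + 2 * (lam (mul a a) * f a a) = 0) ∧
        ∀ a, lam a * lam (mul a a) = 0 := by
  intro sq
  have hfst := fst_crossedProductMul_sq_sq lam f mul
  constructor
  · intro h
    have hconst : ∀ a, f (mul a a) (mul a a) + 2 * (lam (mul a a) * f a a) = 0 := fun a => by
      simpa using (hfst 0 a).symm.trans (congrArg Prod.fst (h (0, a)))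
    refine ⟨hconst, fun a => ?_⟩
    have hlin : 4 * (lam a * lam (mul a a)) = 0 := by
      have := (hfst 1 a).symm.trans (congrArg Prod.fst (h (1, a)))
      simpa [hconst a] using this
    have h4 : (4 : k) ≠ 0 := by
      rw [show (4 : k) = 2 * 2 by norm_num]
      exact mul_ne_zero h2 h2
    exact (mul_eq_zero.mp hlin).resolve_left h4
  · rintro ⟨hconst, hlin⟩ ⟨x, a⟩
    refine Prod.ext ?_ (hmul a)
    rw [hfst, hconst, hlin]
    simp

end CrossedProduct

/-- Crossed systems of a 4-algebra A by the 1-dimensional space k correspond to pairs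
(λ, f) with λ : A → k linear and f a symmetric bilinear form satisfying
f(a²,a²) + 2λ(a²)f(a,a) = 0 and λ(a)λ(a²) = 0: the multiplication
(x,a)∘(y,b) = (λ(a)y + λ(b)x + f(a,b), a·b) on k × A is a 4-algebra structure exactly
under these conditions. -/
theorem stmt17 (k A : Type*) [Field k] [AddCommGroup A] [Module k A]
    (h2 : (2 : k) ≠ 0) (FA : FourAlgebra k A)
    (lam : A →ₗ[k] k) (f : A →ₗ[k] A →ₗ[k] k) :
    let p : k × A → k × A → k × A := fun z w =>
      (lam z.2 * w.1 + lam w.2 * z.1 + f z.2 w.2, FA.mul z.2 w.2)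
    ((∀ z w, p z w = p w z) ∧ (∀ z, p (p z z) (p z z) = 0)) ↔
      ((∀ a b : A, f a b = f b a) ∧
       (∀ a : A, f (FA.mul a a) (FA.mul a a) + 2 * (lam (FA.mul a a) * f a a) = 0) ∧
       (∀ a : A, lam a * lam (FA.mul a a) = 0)) :=
  and_congr (crossedProductMul_comm_iff lam (fun a b => f a b) FA.comm)
    (crossedProductMul_sq_sq_eq_zero_iff h2 lam (fun a b => f a b) FA.four)
end

section
/- A 4-algebra E is metabelian (i.e. (a·b)·(c·d) = 0 for all a,b,c,d ∈ E) if and only if E is isomorphic to an algebra of the form V × A, where A and V are vector spaces, ▷ : A × V → V and f : A × A → V are bilinear maps with f symmetric, and the multiplication is (x,a)∘(y,b) = (a▷y + b▷x + f(a,b), 0); moreover any such algebra V × A is automatically a 4-algebra. -/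
section Model

variable {R V A : Type*} [CommRing R] [AddCommGroup V] [Module R V] [AddCommGroup A] [Module R A]

def modelMul (tr : A →ₗ[R] V →ₗ[R] V) (f : A →ₗ[R] A →ₗ[R] V) (z w : V × A) : V × A :=
  (tr z.2 w.1 + tr w.2 z.1 + f z.2 w.2, 0)

variable (tr : A →ₗ[R] V →ₗ[R] V) (f : A →ₗ[R] A →ₗ[R] V)

theorem modelMul_comm (hf : ∀ a b, f a b = f b a) (z w : V × A) :
    modelMul tr f z w = modelMul tr f w z := by
  simp only [modelMul, hf z.2, add_comm (tr z.2 w.1)]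

theorem modelMul_modelMul (z w z' w' : V × A) :
    modelMul tr f (modelMul tr f z w) (modelMul tr f z' w') = 0 := by
  simp [modelMul]

end Model

section Derived

variable {R E : Type*} [CommRing R] [AddCommGroup E] [Module R E] (m : E →ₗ[R] E →ₗ[R] E)

/-- The span `E · E` of all products. -/
def derivedSubmodule : Submodule R E :=
  Submodule.map₂ m ⊤ ⊤

theorem apply_mem_derivedSubmodule (a b : E) : m a b ∈ derivedSubmodule m :=
  Submodule.apply_mem_map₂ m Submodule.mem_top Submodule.mem_top

variable {m}

theorem apply_eq_zero_of_mem_derivedSubmodule (hmet : ∀ a b c d, m (m a b) (m c d) = 0)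
    {x y : E} (hx : x ∈ derivedSubmodule m) (hy : y ∈ derivedSubmodule m) : m x y = 0 := by
  have hright (a b : E) : derivedSubmodule m ≤ LinearMap.ker (m (m a b)) :=
    Submodule.map₂_le.2 fun c _ d _ => hmet a b c d
  have hleft : derivedSubmodule m ≤ LinearMap.ker (m.flip y) :=
    Submodule.map₂_le.2 fun a _ b _ => hright a b hy
  exact hleft hx

end Derived

section Structure

variable {K E : Type} [Field K] [AddCommGroup E] [Module K E] {m : E →ₗ[K] E →ₗ[K] E}

theorem exists_linearEquiv_modelMul_of_metabelian (hcomm : ∀ a b, m a b = m b a)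
    (hmet : ∀ a b c d, m (m a b) (m c d) = 0) :
    ∃ (V A : Type) (_ : AddCommGroup V) (_ : Module K V) (_ : AddCommGroup A) (_ : Module K A)
      (tr : A →ₗ[K] V →ₗ[K] V) (f : A →ₗ[K] A →ₗ[K] V),
      (∀ a b, f a b = f b a) ∧
      ∃ φ : (V × A) ≃ₗ[K] E, ∀ z w, φ (modelMul tr f z w) = m (φ z) (φ w) := by
  set D := derivedSubmodule m
  obtain ⟨A, hDA⟩ := Submodule.exists_isCompl D
  let mulD : E →ₗ[K] E →ₗ[K] D := m.codRestrict₂ D.subtype D.injective_subtype fun a b => by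
    rw [Submodule.range_subtype]; exact apply_mem_derivedSubmodule m a b
  have hmulD (a b : E) : (mulD a b : E) = m a b :=
    LinearMap.codRestrict₂_apply m D.subtype D.injective_subtype _ a b
  refine ⟨D, A, inferInstance, inferInstance, inferInstance, inferInstance,
    (mulD ∘ₗ A.subtype).compl₂ D.subtype, (mulD ∘ₗ A.subtype).compl₂ A.subtype,
    fun a b => Subtype.ext (by simp [hmulD, hcomm]), Submodule.prodEquivOfIsCompl D A hDA, ?_⟩
  rintro ⟨x, a⟩ ⟨y, b⟩
  have hxy : m x y = 0 := apply_eq_zero_of_mem_derivedSubmodule hmet x.2 y.2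
  simp only [modelMul, Submodule.coe_prodEquivOfIsCompl', Submodule.coe_add,
    Submodule.coe_zero, LinearMap.compl₂_apply, LinearMap.comp_apply, Submodule.coe_subtype,
    hmulD, map_add, LinearMap.add_apply, hxy, hcomm (x : E) b]
  abel

theorem metabelian_of_linearEquiv_modelMul {V A : Type*} [AddCommGroup V] [Module K V]
    [AddCommGroup A] [Module K A] {tr : A →ₗ[K] V →ₗ[K] V} {f : A →ₗ[K] A →ₗ[K] V}
    (φ : (V × A) ≃ₗ[K] E) (hφ : ∀ z w, φ (modelMul tr f z w) = m (φ z) (φ w)) (a b c d : E) :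
    m (m a b) (m c d) = 0 := by
  obtain ⟨z, rfl⟩ := φ.surjective a
  obtain ⟨w, rfl⟩ := φ.surjective b
  obtain ⟨z', rfl⟩ := φ.surjective c
  obtain ⟨w', rfl⟩ := φ.surjective d
  rw [← hφ, ← hφ, ← hφ, modelMul_modelMul, map_zero]

end Structure

theorem stmt19_general (k : Type) [Field k]
    (E : Type) [AddCommGroup E] [Module k E] (FE : FourAlgebra k E) :
    ((∀ a b c d : E, FE.mul (FE.mul a b) (FE.mul c d) = 0) ↔
      (∃ (V A : Type) (_ : AddCommGroup V) (_ : Module k V)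
         (_ : AddCommGroup A) (_ : Module k A)
         (tr : A →ₗ[k] V →ₗ[k] V) (f : A →ₗ[k] A →ₗ[k] V),
        (∀ a b : A, f a b = f b a) ∧
        ∃ φ : (V × A) ≃ₗ[k] E,
          ∀ z w : V × A,
            φ (tr z.2 w.1 + tr w.2 z.1 + f z.2 w.2, 0) = FE.mul (φ z) (φ w))) ∧
    -- every such algebra is a 4-algebra:
    (∀ (V A : Type) (_ : AddCommGroup V) (_ : Module k V)
       (_ : AddCommGroup A) (_ : Module k A)
       (tr : A →ₗ[k] V →ₗ[k] V) (f : A →ₗ[k] A →ₗ[k] V),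
      (∀ a b : A, f a b = f b a) →
      (let p : V × A → V × A → V × A := fun z w =>
          (tr z.2 w.1 + tr w.2 z.1 + f z.2 w.2, 0)
       (∀ z w, p z w = p w z) ∧ (∀ z, p (p z z) (p z z) = 0))) :=
  ⟨⟨exists_linearEquiv_modelMul_of_metabelian FE.comm,
    fun ⟨_, _, _, _, _, _, _, _, _, φ, hφ⟩ => metabelian_of_linearEquiv_modelMul φ hφ⟩,
    fun _ _ _ _ _ _ tr f hf =>
      ⟨modelMul_comm tr f hf, fun z => modelMul_modelMul tr f z z z z⟩⟩

/-- A 4-algebra E is metabelian iff it is isomorphic to an algebra V × A with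
multiplication (x,a)∘(y,b) = (a▷y + b▷x + f(a,b), 0) for vector spaces V, A and bilinear
maps ▷ : A × V → V, f : A × A → V with f symmetric; moreover every such algebra V × A is
automatically a 4-algebra. -/
theorem stmt19 (k : Type) [Field k] (h2 : (2 : k) ≠ 0)
    (E : Type) [AddCommGroup E] [Module k E] (FE : FourAlgebra k E) :
    ((∀ a b c d : E, FE.mul (FE.mul a b) (FE.mul c d) = 0) ↔
      (∃ (V A : Type) (_ : AddCommGroup V) (_ : Module k V)
         (_ : AddCommGroup A) (_ : Module k A)
         (tr : A →ₗ[k] V →ₗ[k] V) (f : A →ₗ[k] A →ₗ[k] V),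
        (∀ a b : A, f a b = f b a) ∧
        ∃ φ : (V × A) ≃ₗ[k] E,
          ∀ z w : V × A,
            φ (tr z.2 w.1 + tr w.2 z.1 + f z.2 w.2, 0) = FE.mul (φ z) (φ w))) ∧
    -- every such algebra is a 4-algebra:
    (∀ (V A : Type) (_ : AddCommGroup V) (_ : Module k V)
       (_ : AddCommGroup A) (_ : Module k A)
       (tr : A →ₗ[k] V →ₗ[k] V) (f : A →ₗ[k] A →ₗ[k] V),
      (∀ a b : A, f a b = f b a) →
      (let p : V × A → V × A → V × A := fun z w =>
          (tr z.2 w.1 + tr w.2 z.1 + f z.2 w.2, 0)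
       (∀ z w, p z w = p w z) ∧ (∀ z, p (p z z) (p z z) = 0))) :=
  stmt19_general k E FE
end
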